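/- arXiv:2502.20917 — 3 statements merged into one kernel-verified Lean document; each statement's English description precedes it below -/
import Mathlib

section
/- For every critical value c and every a > c, F(a; θ, c) → 1 as θ → −∞ and F(a; θ, c) → 0 as θ → +∞. -/
/-!
Write `1 - Φ(t)` as the standard Gaussian tail `G(t) = P(Z > t)`, so that
`F(a; θ, c) = 1 - G(a - θ) / G(c - θ)`. Shifting the Gaussian density by `d ≥ 0` multiplies it by
`exp(-(x d + d²/2))`, which on `(t, ∞)` is at most `exp(-(t d + d²/2))`; hence
`G(t + d) ≤ exp(-(t d + d²/2)) G(t)`, and with `t = c - θ → ∞`, `d = a - c` the ratio tends to `0`.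
As `θ → ∞`, both `Φ(a - θ)` and `Φ(c - θ)` tend to `0`, so `F → 0 / 1`.
-/

open Filter Set

noncomputable def Phi (t : ℝ) : ℝ :=
  (Real.sqrt (2 * Real.pi))⁻¹ * ∫ s in Set.Iic t, Real.exp (-(s ^ 2) / 2)

noncomputable def F (a θ c : ℝ) : ℝ :=
  (Phi (a - θ) - Phi (c - θ)) / (1 - Phi (c - θ))

open MeasureTheory ProbabilityTheory Topology
open scoped NNReal

lemma measureReal_gaussianReal (μ : ℝ) {v : ℝ≥0} (hv : v ≠ 0) (s : Set ℝ) :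
    (gaussianReal μ v).real s = ∫ x in s, gaussianPDFReal μ v x := by
  rw [measureReal_def, gaussianReal_apply_eq_integral μ hv,
    ENNReal.toReal_ofReal (integral_nonneg (gaussianPDFReal_nonneg μ v))]

lemma measureReal_gaussianReal_Ioi_pos (μ : ℝ) {v : ℝ≥0} (hv : v ≠ 0) (t : ℝ) :
    0 < (gaussianReal μ v).real (Ioi t) := by
  refine ENNReal.toReal_pos (fun h => ?_) (measure_ne_top _ _)
  simpa using gaussianReal_absolutelyContinuous' μ hv h

lemma gaussianPDFReal_add_eq_exp_mul (μ : ℝ) (v : ℝ≥0) (x d : ℝ) :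
    gaussianPDFReal μ v (x + d) =
      Real.exp (-(((x - μ) * d + d ^ 2 / 2) / v)) * gaussianPDFReal μ v x := by
  rcases eq_or_ne v 0 with rfl | hv
  · simp
  have hv' : (v : ℝ) ≠ 0 := NNReal.coe_ne_zero.2 hv
  rw [gaussianPDFReal, gaussianPDFReal, mul_left_comm, ← Real.exp_add]
  congr 2
  field_simp
  ring

lemma measureReal_gaussianReal_Ioi_add_le (μ : ℝ) {v : ℝ≥0} (hv : v ≠ 0) (t : ℝ) {d : ℝ}
    (hd : 0 ≤ d) :
    (gaussianReal μ v).real (Ioi (t + d)) ≤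
      Real.exp (-(((t - μ) * d + d ^ 2 / 2) / v)) * (gaussianReal μ v).real (Ioi t) := by
  have hv' : (0 : ℝ) < v := NNReal.coe_pos.2 (pos_iff_ne_zero.2 hv)
  have hpdf := integrable_gaussianPDFReal μ v
  rw [measureReal_gaussianReal μ hv, measureReal_gaussianReal μ hv, ← integral_const_mul,
    ← (measurePreserving_add_right volume d).setIntegral_preimage_emb
      (measurableEmbedding_addRight d), preimage_add_const_Ioi, add_sub_cancel_right]
  refine setIntegral_mono_on (hpdf.comp_add_right d).integrableOn
    (hpdf.const_mul _).integrableOn measurableSet_Ioi fun x hx => ?_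
  rw [gaussianPDFReal_add_eq_exp_mul]
  refine mul_le_mul_of_nonneg_right (Real.exp_le_exp.2 ?_) (gaussianPDFReal_nonneg μ v x)
  gcongr
  exact hx.le

lemma tendsto_measureReal_gaussianReal_Ioi_add_div (μ : ℝ) {v : ℝ≥0} (hv : v ≠ 0) {d : ℝ}
    (hd : 0 < d) :
    Tendsto (fun t => (gaussianReal μ v).real (Ioi (t + d)) / (gaussianReal μ v).real (Ioi t))
      atTop (𝓝 0) := by
  have hv' : (0 : ℝ) < v := NNReal.coe_pos.2 (pos_iff_ne_zero.2 hv)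
  have hexp : Tendsto (fun t => ((t - μ) * d + d ^ 2 / 2) / v) atTop atTop := by
    refine Tendsto.atTop_div_const hv' (tendsto_atTop_add_const_right _ _ ?_)
    exact (tendsto_atTop_add_const_right _ _ tendsto_id).atTop_mul_const hd
  refine tendsto_of_tendsto_of_tendsto_of_le_of_le tendsto_const_nhds
    (Real.tendsto_exp_neg_atTop_nhds_zero.comp hexp) (fun t => ?_) (fun t => ?_)
  · exact div_nonneg measureReal_nonneg measureReal_nonneg
  · exact div_le_of_le_mul₀ measureReal_nonneg (Real.exp_pos _).le
      (measureReal_gaussianReal_Ioi_add_le μ hv t hd.le)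

lemma Phi_eq_cdf_gaussianReal (t : ℝ) : Phi t = cdf (gaussianReal 0 1) t := by
  rw [cdf_eq_real, measureReal_gaussianReal 0 one_ne_zero, Phi, ← integral_const_mul]
  simp [gaussianPDFReal]

lemma one_sub_Phi (t : ℝ) : 1 - Phi t = (gaussianReal 0 1).real (Ioi t) := by
  rw [Phi_eq_cdf_gaussianReal, cdf_eq_real, ← compl_Iic, measureReal_compl measurableSet_Iic,
    probReal_univ]

lemma tendsto_Phi_atBot : Tendsto Phi atBot (𝓝 0) := by
  simpa only [← funext Phi_eq_cdf_gaussianReal] using tendsto_cdf_atBot (gaussianReal 0 1)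

lemma F_eq_one_sub_div (a θ c : ℝ) :
    F a θ c =
      1 - (gaussianReal 0 1).real (Ioi (a - θ)) / (gaussianReal 0 1).real (Ioi (c - θ)) := by
  have hc := measureReal_gaussianReal_Ioi_pos 0 one_ne_zero (c - θ)
  rw [← one_sub_Phi] at hc ⊢
  rw [← one_sub_Phi, one_sub_div hc.ne', F]
  ring

/-- For every critical value `c` and every `a > c`, `F(a; θ, c) → 1` as `θ → −∞`
and `F(a; θ, c) → 0` as `θ → +∞`. -/
theorem stmt_2 (c a : ℝ) (ha : c < a) :
    Tendsto (fun θ : ℝ => F a θ c) atBot (nhds 1) ∧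
    Tendsto (fun θ : ℝ => F a θ c) atTop (nhds 0) := by
  have hsub (x : ℝ) : Tendsto (fun θ : ℝ => x - θ) atBot atTop := by
    simpa only [sub_eq_add_neg] using tendsto_atTop_add_const_left _ x tendsto_neg_atBot_atTop
  have hsub' (x : ℝ) : Tendsto (fun θ : ℝ => x - θ) atTop atBot := by
    simpa only [sub_eq_add_neg] using tendsto_atBot_add_const_left _ x tendsto_neg_atTop_atBot
  constructor
  · have hratio := (tendsto_measureReal_gaussianReal_Ioi_add_div 0 one_ne_zero
      (sub_pos.2 ha)).comp (hsub c)
    simpa [F_eq_one_sub_div, Function.comp_def] using tendsto_const_nhds (x := (1 : ℝ)).sub hratio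
  · have hPhi (x : ℝ) : Tendsto (fun θ => Phi (x - θ)) atTop (𝓝 0) :=
      tendsto_Phi_atBot.comp (hsub' x)
    have hF := ((hPhi a).sub (hPhi c)).div (tendsto_const_nhds.sub (hPhi c))
      (by norm_num : (1 : ℝ) - 0 ≠ 0)
    rwa [sub_zero, sub_zero, zero_div] at hF
end

section
/- (Theorem 1, marginal significance.) Fix a critical value c and p ∈ (0, 1). Then the implicitly defined quantile diverges to −∞ as the observed statistic approaches the critical value from above: for every M ∈ ℝ there exists δ > 0 such that for every x with c < x < c + δ and every θ ∈ ℝ satisfying F(x; θ, c) = p, one has θ < −M. -/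
open Filter Set

/-!
If `θ ≥ -M`, the truncation point `c - θ` stays at most `c + M`, so the denominator
`1 - Φ(c - θ)` is bounded below by `1 - Φ(c + M) > 0`, while the numerator is at most
`(x - c)/√(2π)` because the standard normal density is bounded by `1/√(2π)`. Hence
`F(x; θ, c) = O(x - c)` uniformly in `θ ≥ -M`, and it drops below `p` once `x` is close
enough to `c`.
-/

open Real MeasureTheory

lemma integrable_exp_neg_sq_div_two : Integrable fun s : ℝ => exp (-(s ^ 2) / 2) := by
  simpa [neg_div, div_eq_inv_mul] using integrable_exp_neg_mul_sq (b := 1 / 2) (by norm_num)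

lemma integral_exp_neg_sq_div_two : ∫ s : ℝ, exp (-(s ^ 2) / 2) = √(2 * π) := by
  simpa [neg_div, div_eq_inv_mul, mul_comm] using integral_gaussian (1 / 2)

lemma Phi_sub_Phi {a b : ℝ} (hab : a ≤ b) :
    Phi b - Phi a = (√(2 * π))⁻¹ * ∫ s in Ioc a b, exp (-(s ^ 2) / 2) := by
  have hg := integrable_exp_neg_sq_div_two
  rw [Phi, Phi, ← mul_sub, intervalIntegral.integral_Iic_sub_Iic hg.integrableOn hg.integrableOn,
    intervalIntegral.integral_of_le hab]

lemma Phi_mono : Monotone Phi := fun a b hab => by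
  have hint : 0 ≤ ∫ s in Ioc a b, exp (-(s ^ 2) / 2) :=
    setIntegral_nonneg measurableSet_Ioc fun s _ => (exp_pos _).le
  have := Phi_sub_Phi hab
  nlinarith [inv_nonneg.2 (sqrt_nonneg (2 * π))]

lemma Phi_sub_Phi_le {a b : ℝ} (hab : a ≤ b) : Phi b - Phi a ≤ (b - a) / √(2 * π) := by
  have hint : ∫ s in Ioc a b, exp (-(s ^ 2) / 2) ≤ b - a :=
    calc ∫ s in Ioc a b, exp (-(s ^ 2) / 2)
        ≤ ∫ _ in Ioc a b, (1 : ℝ) :=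
          setIntegral_mono_on integrable_exp_neg_sq_div_two.integrableOn
            (integrableOn_const (by simp)) measurableSet_Ioc
            fun s _ => exp_le_one_iff.2 (by nlinarith [sq_nonneg s])
      _ = b - a := by simp [hab]
  rw [Phi_sub_Phi hab, div_eq_inv_mul]
  exact mul_le_mul_of_nonneg_left hint (inv_nonneg.2 (sqrt_nonneg _))

lemma Phi_lt_one (t : ℝ) : Phi t < 1 := by
  have hg := integrable_exp_neg_sq_div_two
  have hsplit := intervalIntegral.integral_Iic_add_Ioi (b := t) hg.integrableOn hg.integrableOn
  rw [integral_exp_neg_sq_div_two] at hsplit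
  have htail : 0 < ∫ s in Ioi t, exp (-(s ^ 2) / 2) := by
    rw [setIntegral_pos_iff_support_of_nonneg_ae
      (Eventually.of_forall fun s => (exp_pos _).le) hg.integrableOn]
    simp [Function.support, (exp_pos _).ne']
  have hsqrt : 0 < √(2 * π) := by positivity
  rw [Phi, inv_mul_lt_iff₀ hsqrt]
  linarith

lemma F_le_of_sub_le {x θ c t : ℝ} (hcx : c ≤ x) (ht : c - θ ≤ t) :
    F x θ c ≤ (x - c) / (√(2 * π) * (1 - Phi t)) := by
  have hnum := Phi_sub_Phi_le (sub_le_sub_right hcx θ)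
  rw [sub_sub_sub_cancel_right] at hnum
  rw [F, ← div_div]
  exact div_le_div₀ (by positivity) hnum (sub_pos.2 (Phi_lt_one t))
    (sub_le_sub_left (Phi_mono ht) 1)

/-- (Theorem 1, marginal significance.) Fix `c` and `p ∈ (0,1)`. For every `M`
there is `δ > 0` such that for every `x` with `c < x < c + δ` and every `θ` with
`F(x; θ, c) = p`, one has `θ < −M`. -/
theorem stmt_3 (c p : ℝ) (hp : p ∈ Set.Ioo (0 : ℝ) 1) :
    ∀ M : ℝ, ∃ δ > (0 : ℝ), ∀ x : ℝ, c < x → x < c + δ →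
      ∀ θ : ℝ, F x θ c = p → θ < -M := by
  intro M
  have hK : 0 < √(2 * π) * (1 - Phi (c + M)) :=
    mul_pos (by positivity) (sub_pos.2 (Phi_lt_one _))
  refine ⟨p * (√(2 * π) * (1 - Phi (c + M))), mul_pos hp.1 hK, ?_⟩
  intro x hcx hxδ θ hF
  by_contra! hθ
  have hFle := F_le_of_sub_le hcx.le (t := c + M) (by linarith)
  rw [hF, le_div_iff₀ hK] at hFle
  linarith
end

section
/- (Conditional coverage.) Let X be distributed according to the Gaussian measure on ℝ with mean θ and variance 1, and let α ∈ (0, 1). Then the conditional probability, given {X ≥ c}, of the event {α/2 ≤ F(X; θ, c) ≤ 1 − α/2} equals 1 − α. -/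
open Filter Set MeasureTheory ProbabilityTheory

namespace ProbabilityTheory

variable {μ : Measure ℝ} [IsProbabilityMeasure μ]

lemma measure_Ioc_eq_ofReal_cdf_sub (a b : ℝ) :
    μ (Ioc a b) = ENNReal.ofReal (cdf μ b - cdf μ a) := by
  rw [← (cdf μ).measure_Ioc, measure_cdf]

lemma strictMono_cdf_of_absolutelyContinuous (h : volume ≪ μ) : StrictMono (cdf μ) := by
  intro a b hab
  have hpos : μ (Ioc a b) ≠ 0 := fun h0 ↦ hab.not_ge <| by
    simpa [Real.volume_Ioc] using h h0
  rw [measure_Ioc_eq_ofReal_cdf_sub] at hpos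
  simpa using hpos

variable [NullSingletonClass μ]

lemma leftLim_cdf (x : ℝ) : Function.leftLim (cdf μ) x = cdf μ x := by
  have hatom : (cdf μ).measure {x} = 0 := by rw [measure_cdf, measure_singleton (μ := μ)]
  rw [StieltjesFunction.measure_singleton, ENNReal.ofReal_eq_zero] at hatom
  exact le_antisymm ((monotone_cdf μ).leftLim_le le_rfl) (by linarith)

lemma continuous_cdf : Continuous (cdf μ) := by
  refine continuous_iff_continuousAt.2 fun x ↦ continuousAt_iff_continuous_left_right.2 ⟨?_, ?_⟩
  · exact continuousWithinAt_Iio_iff_Iic.1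
      ((monotone_cdf μ).continuousWithinAt_Iio_iff_leftLim_eq.2 (leftLim_cdf x))
  · exact (cdf μ).right_continuous x

lemma Ioo_subset_range_cdf : Ioo 0 1 ⊆ range (cdf μ) := by
  rintro v ⟨hv0, hv1⟩
  obtain ⟨a, ha⟩ := ((tendsto_cdf_atBot μ).eventually (eventually_lt_nhds hv0)).exists
  obtain ⟨b, hb⟩ := ((tendsto_cdf_atTop μ).eventually (eventually_gt_nhds hv1)).exists
  exact intermediate_value_univ a b continuous_cdf ⟨ha.le, hb.le⟩

lemma measure_Ici_eq_ofReal_one_sub_cdf (c : ℝ) :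
    μ (Ici c) = ENNReal.ofReal (1 - cdf μ c) := by
  rw [← measure_congr (Ioi_ae_eq_Ici (μ := μ)), ← (cdf μ).measure_Ioi (tendsto_cdf_atTop μ),
    measure_cdf]

/-- Probability integral transform: `cdf μ` pushes `μ` forward to the uniform law on `[0, 1]`. -/
lemma measure_cdf_mem_Icc (hG : StrictMono (cdf μ)) {p q : ℝ} (hp : 0 < p) (hpq : p ≤ q)
    (hq : q < 1) : μ {x | cdf μ x ∈ Icc p q} = ENNReal.ofReal (q - p) := by
  obtain ⟨a, rfl⟩ := Ioo_subset_range_cdf (μ := μ) ⟨hp, hpq.trans_lt hq⟩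
  obtain ⟨b, rfl⟩ := Ioo_subset_range_cdf (μ := μ) ⟨hp.trans_le hpq, hq⟩
  have hset : {x | cdf μ x ∈ Icc (cdf μ a) (cdf μ b)} = Icc a b := by
    ext x; simp [hG.le_iff_le]
  rw [hset, ← measure_congr Ioc_ae_eq_Icc, measure_Ioc_eq_ofReal_cdf_sub]

lemma cond_Ici_truncated_cdf_mem_Icc (hG : StrictMono (cdf μ)) (c : ℝ) {p q : ℝ} (hp : 0 < p)
    (hpq : p ≤ q) (hq : q < 1) :
    μ[|Ici c] {x | p ≤ (cdf μ x - cdf μ c) / (1 - cdf μ c) ∧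
        (cdf μ x - cdf μ c) / (1 - cdf μ c) ≤ q} = ENNReal.ofReal (q - p) := by
  set k := cdf μ c
  have hk : 0 < 1 - k := sub_pos.2 ((hG (lt_add_one c)).trans_le (cdf_le_one μ _))
  have hset : {x | p ≤ (cdf μ x - k) / (1 - k) ∧ (cdf μ x - k) / (1 - k) ≤ q} =
      {x | cdf μ x ∈ Icc (k + p * (1 - k)) (k + q * (1 - k))} := by
    ext x
    simp only [mem_ofPred_eq, mem_Icc, le_div_iff₀ hk, div_le_iff₀ hk]
    constructor <;> rintro ⟨h₁, h₂⟩ <;> constructor <;> linarith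
  have hsub : {x | cdf μ x ∈ Icc (k + p * (1 - k)) (k + q * (1 - k))} ⊆ Ici c := fun x hx ↦
    hG.le_iff_le.1 (le_trans (by nlinarith) hx.1)
  have hk0 := cdf_nonneg μ c
  rw [cond_apply measurableSet_Ici, hset, inter_eq_self_of_subset_right hsub,
    measure_cdf_mem_Icc hG (by nlinarith) (by nlinarith) (by nlinarith),
    measure_Ici_eq_ofReal_one_sub_cdf, show k + q * (1 - k) - (k + p * (1 - k)) =
      (1 - k) * (q - p) by ring, ENNReal.ofReal_mul hk.le,
    ENNReal.inv_mul_cancel_left (by simpa using hk) ENNReal.ofReal_ne_top]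

end ProbabilityTheory

lemma Phi_eq_measureReal_Iic (t : ℝ) : Phi t = (gaussianReal 0 1).real (Iic t) := by
  have hnonneg : 0 ≤ ∫ x in Iic t, gaussianPDFReal 0 1 x :=
    setIntegral_nonneg measurableSet_Iic fun x _ ↦ gaussianPDFReal_nonneg _ _ _
  rw [measureReal_def, gaussianReal_apply_eq_integral 0 one_ne_zero, ENNReal.toReal_ofReal hnonneg,
    Phi, ← integral_const_mul]
  simp [gaussianPDFReal]

lemma cdf_gaussianReal_one (θ x : ℝ) : cdf (gaussianReal θ 1) x = Phi (x - θ) := by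
  have hmap : (gaussianReal 0 1).map (· + θ) = gaussianReal θ 1 := by
    simpa using gaussianReal_map_add_const (μ := 0) (v := 1) θ
  rw [cdf_eq_real, ← hmap, map_measureReal_apply (measurable_add_const θ) measurableSet_Iic,
    Phi_eq_measureReal_Iic]
  congr 1
  ext s
  simp [le_sub_iff_add_le]

/-- (Conditional coverage.) Let `X ~ N(θ, 1)` and `α ∈ (0,1)`. The conditional
probability, given `{X ≥ c}`, of `{α/2 ≤ F(X; θ, c) ≤ 1 − α/2}` equals `1 − α`. -/
theorem stmt_13 (θ c α : ℝ) (hα : α ∈ Set.Ioo (0 : ℝ) 1) :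
    (gaussianReal θ 1)[|{x : ℝ | c ≤ x}]
        {x : ℝ | α / 2 ≤ F x θ c ∧ F x θ c ≤ 1 - α / 2} =
      ENNReal.ofReal (1 - α) := by
  obtain ⟨hα₀, hα₁⟩ := hα
  have := nullSingletonClass_gaussianReal (μ := θ) one_ne_zero
  have hG := strictMono_cdf_of_absolutelyContinuous
    (gaussianReal_absolutelyContinuous' θ one_ne_zero)
  have hF (x : ℝ) : F x θ c = (cdf (gaussianReal θ 1) x - cdf (gaussianReal θ 1) c) /
      (1 - cdf (gaussianReal θ 1) c) := by
    simp only [F, cdf_gaussianReal_one]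
  simp only [hF]
  rw [show 1 - α = (1 - α / 2) - α / 2 by ring]
  exact cond_Ici_truncated_cdf_mem_Icc hG c (by linarith) (by linarith) (by linarith)
end
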